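/- arXiv:1910.09880 — 4 statements merged into one kernel-verified Lean document; each statement's English description precedes it below -/
import Mathlib

section
/- Let d ≥ 1 and x, y ∈ ℝ^d. Let a, b ∈ ℝ^d be independent random vectors whose entries are i.i.d. real Gaussian N(0, 1/2). Then E[ (⟨x,a⟩² + ⟨x,b⟩²) (⟨y,a⟩² + ⟨y,b⟩²) ] = ‖x‖² ‖y‖² + ⟨x,y⟩², where ‖·‖ is the Euclidean norm and ⟨·,·⟩ the Euclidean inner product. (Equivalently: for u a standard complex Gaussian vector, E[|⟨x,u⟩|² |⟨y,u⟩|²] = ‖x‖²‖y‖² + ⟨x,y⟩².) -/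
open MeasureTheory ProbabilityTheory

/-- The dot product on `Fin d → ℝ`. -/
noncomputable def dotp {d : ℕ} (x y : Fin d → ℝ) : ℝ := ∑ i, x i * y i

/-- The standard Gaussian product measure `N(0, 1/2)^d` on `Fin d → ℝ`. -/
noncomputable def gaussHalf (d : ℕ) : Measure (Fin d → ℝ) :=
  Measure.pi fun _ => gaussianReal 0 (1/2)

/-!
Each linear form `a ↦ ⟨v, a⟩` is `N(0, ‖v‖²/2)`-distributed under `gaussHalf d`, so its fourth
moment is `3‖v‖⁴/4`. Polarizing this quartic form in `v`, through
`12 s²t² = (s + t)⁴ + (s - t)⁴ - 2s⁴ - 2t⁴`, gives `E[⟨x,a⟩²⟨y,a⟩²] = (‖x‖²‖y‖² + 2⟨x,y⟩²)/4`.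
For the independent pair `(a, b)`, the expectation of `(F a + F b)(G a + G b)` is
`2 E[F G] + 2 E[F] E[G]`, which with `F = ⟨x,·⟩²`, `G = ⟨y,·⟩²` yields the claim.
-/

open Real Set
open scoped NNReal Nat

open Complex in
lemma pi_gaussianReal_map_sum_mul {ι : Type*} [Fintype ι] (m : ι → ℝ) (s : ι → ℝ≥0)
    (v : ι → ℝ) {w : ℝ≥0} (hw : (w : ℝ) = ∑ i, v i ^ 2 * s i) :
    (Measure.pi fun i => gaussianReal (m i) (s i)).map (fun a => ∑ i, v i * a i)
      = gaussianReal (∑ i, v i * m i) w := by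
  refine Measure.ext_of_charFun (funext fun t => ?_)
  have h_prod : (fun a : ι → ℝ => cexp (t * ↑(∑ i, v i * a i) * I))
      = fun a => ∏ i, cexp (↑(t * v i) * a i * I) := by
    ext a
    push_cast
    rw [← Complex.exp_sum, Finset.mul_sum, Finset.sum_mul]
    simp only [mul_assoc]
  rw [charFun_apply_real, integral_map (Measurable.aemeasurable (by fun_prop)) (by fun_prop),
    h_prod, integral_fintype_prod_eq_prod (f := fun i (x : ℝ) => cexp (↑(t * v i) * ↑x * I))]
  simp_rw [← charFun_apply_real, charFun_gaussianReal, ← Complex.exp_sum, hw]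
  congr 1
  push_cast
  simp only [Finset.sum_sub_distrib, Finset.mul_sum, Finset.sum_mul, Finset.sum_div]
  exact congrArg₂ _ (Finset.sum_congr rfl fun i _ => by ring)
    (Finset.sum_congr rfl fun i _ => by ring)

lemma integral_pow_two_mul_mul_exp_neg_mul_sq {b : ℝ} (hb : 0 < b) (k : ℕ) :
    ∫ x, x ^ (2 * k) * rexp (-b * x ^ 2) = (2 * k - 1)‼ * √(π / b) / (2 * b) ^ k := by
  have h_even : ∫ x, x ^ (2 * k) * rexp (-b * x ^ 2)
      = 2 * ∫ x in Ioi (0 : ℝ), x ^ ((2 * k : ℕ) : ℝ) * rexp (-b * x ^ (2 : ℝ)) := by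
    simp only [Real.rpow_natCast, Real.rpow_two]
    rw [← integral_comp_abs (f := fun x => x ^ (2 * k) * rexp (-b * x ^ 2))]
    simp only [pow_mul, sq_abs]
  have h_gamma : Gamma ((((2 * k : ℕ) : ℝ) + 1) / 2) = (2 * k - 1)‼ * √π / 2 ^ k := by
    rw [← Real.Gamma_nat_add_half]; congr 1; push_cast; ring
  have h_rpow : b ^ (-(((2 * k : ℕ) : ℝ) + 1) / 2) = (b ^ k * √b)⁻¹ := by
    rw [Real.sqrt_eq_rpow, ← Real.rpow_natCast, ← Real.rpow_add hb, ← Real.rpow_neg hb.le]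
    congr 1; push_cast; ring
  rw [h_even, integral_rpow_mul_exp_neg_mul_rpow two_pos
      (neg_one_lt_zero.trans_le (Nat.cast_nonneg _)) hb, h_gamma, h_rpow,
    Real.sqrt_div' _ hb.le, mul_pow]
  field_simp

lemma integral_pow_two_mul_gaussianReal (w : ℝ≥0) (k : ℕ) :
    ∫ x, x ^ (2 * k) ∂gaussianReal 0 w = (2 * k - 1)‼ * (w : ℝ) ^ k := by
  rcases eq_or_ne w 0 with rfl | hw
  · cases k <;> simp [gaussianReal_zero_var]
  have hw_pos : (0 : ℝ) < w := by positivity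
  have h_exponent (x : ℝ) : -(x - 0) ^ 2 / (2 * w) = -(2 * w : ℝ)⁻¹ * x ^ 2 := by ring
  simp_rw [integral_gaussianReal_eq_integral_smul hw, gaussianPDFReal, smul_eq_mul, h_exponent,
    mul_comm _ (_ ^ (2 * k)), mul_comm (_⁻¹) (rexp _), ← mul_assoc]
  rw [integral_mul_const, integral_pow_two_mul_mul_exp_neg_mul_sq (by positivity),
    show π / (2 * (w : ℝ))⁻¹ = 2 * π * w by field_simp]
  have h_sqrt : √(2 * π * w) ≠ 0 := by positivity
  field_simp
  rw [one_div, inv_pow, inv_mul_cancel₀ (pow_ne_zero _ hw_pos.ne')]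

lemma integrable_pow_gaussianReal (μ : ℝ) (v : ℝ≥0) (n : ℕ) :
    Integrable (fun x : ℝ => x ^ n) (gaussianReal μ v) := by
  have h := (memLp_id_gaussianReal (μ := μ) (v := v) n).integrable_norm_pow'
  simp_rw [id, ← norm_pow] at h
  exact (integrable_norm_iff (by fun_prop)).mp h

lemma integral_sq_mul_sq_eq_polarization {Ω : Type*} [MeasurableSpace Ω] {μ : Measure Ω}
    {X Y : Ω → ℝ} (hX : Integrable (fun ω => X ω ^ 4) μ) (hY : Integrable (fun ω => Y ω ^ 4) μ)
    (hadd : Integrable (fun ω => (X ω + Y ω) ^ 4) μ)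
    (hsub : Integrable (fun ω => (X ω - Y ω) ^ 4) μ) :
    ∫ ω, X ω ^ 2 * Y ω ^ 2 ∂μ
      = ((∫ ω, (X ω + Y ω) ^ 4 ∂μ) + (∫ ω, (X ω - Y ω) ^ 4 ∂μ)
          - 2 * (∫ ω, X ω ^ 4 ∂μ) - 2 * ∫ ω, Y ω ^ 4 ∂μ) / 12 := by
  have h_pointwise (ω : Ω) : X ω ^ 2 * Y ω ^ 2
      = ((X ω + Y ω) ^ 4 + (X ω - Y ω) ^ 4 - 2 * X ω ^ 4 - 2 * Y ω ^ 4) / 12 := by ring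
  simp_rw [h_pointwise]
  rw [integral_div, integral_sub, integral_sub, integral_add hadd hsub, integral_const_mul,
    integral_const_mul]
  · exact hadd.add hsub
  · exact hX.const_mul 2
  · exact (hadd.add hsub).sub (hX.const_mul 2)
  · exact hY.const_mul 2

lemma integral_prod_self_add_mul_add {α : Type*} [MeasurableSpace α] {μ : Measure α}
    [IsProbabilityMeasure μ] {f g : α → ℝ} (hf : Integrable f μ) (hg : Integrable g μ)
    (hfg : Integrable (fun a => f a * g a) μ) :
    ∫ p, (f p.1 + f p.2) * (g p.1 + g p.2) ∂μ.prod μ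
      = 2 * ∫ a, f a * g a ∂μ + 2 * (∫ a, f a ∂μ) * ∫ a, g a ∂μ := by
  have h_expand (p : α × α) : (f p.1 + f p.2) * (g p.1 + g p.2)
      = f p.1 * g p.1 + f p.1 * g p.2 + (f p.2 * g p.1 + f p.2 * g p.2) := by ring
  simp_rw [h_expand]
  have h_fst : Integrable (fun p : α × α => f p.1 * g p.1) (μ.prod μ) := hfg.comp_fst μ
  have h_snd : Integrable (fun p : α × α => f p.2 * g p.2) (μ.prod μ) := hfg.comp_snd μ
  have h_fg : Integrable (fun p : α × α => f p.1 * g p.2) (μ.prod μ) := hf.mul_prod hg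
  have h_gf : Integrable (fun p : α × α => f p.2 * g p.1) (μ.prod μ) :=
    (hg.mul_prod hf).congr (ae_of_all _ fun p => mul_comm _ _)
  rw [integral_add, integral_add h_fst h_fg, integral_add h_gf h_snd,
    integral_fun_fst (fun a => f a * g a), integral_fun_snd (fun a => f a * g a),
    integral_prod_mul f g]
  · simp_rw [mul_comm (f _) (g _)]
    rw [integral_prod_mul g f]
    simp only [probReal_univ, smul_eq_mul, one_mul]
    ring
  · exact h_fst.add h_fg
  · exact h_gf.add h_snd

lemma dotp_eq_dotProduct {d : ℕ} (x y : Fin d → ℝ) : dotp x y = x ⬝ᵥ y := rfl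

lemma measurable_dotp {d : ℕ} (v : Fin d → ℝ) : Measurable (dotp v) := by
  unfold dotp; fun_prop

lemma dotp_self_nonneg {d : ℕ} (v : Fin d → ℝ) : 0 ≤ dotp v v :=
  dotProduct_self_star_nonneg v

instance isProbabilityMeasure_gaussHalf (d : ℕ) : IsProbabilityMeasure (gaussHalf d) := by
  unfold gaussHalf; infer_instance

lemma map_dotp_gaussHalf {d : ℕ} (v : Fin d → ℝ) :
    (gaussHalf d).map (dotp v) = gaussianReal 0 (dotp v v / 2).toNNReal := by
  have h_var : (((dotp v v / 2).toNNReal : ℝ≥0) : ℝ) = ∑ i, v i ^ 2 * ((1 / 2 : ℝ≥0) : ℝ) := by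
    rw [Real.coe_toNNReal _ (by linarith [dotp_self_nonneg v]), dotp, Finset.sum_div]
    simp [sq, div_eq_mul_inv]
  have h := pi_gaussianReal_map_sum_mul (fun _ : Fin d => 0) (fun _ => 1 / 2) v h_var
  simp only [mul_zero, Finset.sum_const_zero] at h
  exact h

lemma integrable_dotp_pow_gaussHalf {d : ℕ} (v : Fin d → ℝ) (n : ℕ) :
    Integrable (fun a => dotp v a ^ n) (gaussHalf d) := by
  have h : Integrable (fun x : ℝ => x ^ n) ((gaussHalf d).map (dotp v)) := by
    rw [map_dotp_gaussHalf]; exact integrable_pow_gaussianReal 0 _ n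
  exact h.comp_measurable (measurable_dotp v)

lemma integral_dotp_pow_two_mul_gaussHalf {d : ℕ} (v : Fin d → ℝ) (k : ℕ) :
    ∫ a, dotp v a ^ (2 * k) ∂gaussHalf d = (2 * k - 1)‼ * (dotp v v / 2) ^ k := by
  rw [← integral_map (f := fun x => x ^ (2 * k)) (measurable_dotp v).aemeasurable
    (by fun_prop), map_dotp_gaussHalf, integral_pow_two_mul_gaussianReal,
    Real.coe_toNNReal _ (by linarith [dotp_self_nonneg v])]

lemma integral_dotp_sq_gaussHalf {d : ℕ} (v : Fin d → ℝ) :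
    ∫ a, dotp v a ^ 2 ∂gaussHalf d = dotp v v / 2 := by
  simpa using integral_dotp_pow_two_mul_gaussHalf v 1

lemma integral_dotp_sq_mul_dotp_sq_gaussHalf {d : ℕ} (x y : Fin d → ℝ) :
    ∫ a, dotp x a ^ 2 * dotp y a ^ 2 ∂gaussHalf d
      = (dotp x x * dotp y y + 2 * dotp x y ^ 2) / 4 := by
  have h_fourth (v : Fin d → ℝ) : ∫ a, dotp v a ^ 4 ∂gaussHalf d = 3 * (dotp v v / 2) ^ 2 := by
    simpa using integral_dotp_pow_two_mul_gaussHalf v 2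
  have h_add (a : Fin d → ℝ) : dotp x a + dotp y a = dotp (x + y) a := (add_dotProduct x y a).symm
  have h_sub (a : Fin d → ℝ) : dotp x a - dotp y a = dotp (x - y) a := (sub_dotProduct x y a).symm
  rw [integral_sq_mul_sq_eq_polarization (integrable_dotp_pow_gaussHalf x 4)
    (integrable_dotp_pow_gaussHalf y 4)
    (by simpa only [h_add] using integrable_dotp_pow_gaussHalf (x + y) 4)
    (by simpa only [h_sub] using integrable_dotp_pow_gaussHalf (x - y) 4)]
  simp only [h_add, h_sub, h_fourth]
  simp only [dotp_eq_dotProduct, add_dotProduct, sub_dotProduct, dotProduct_add, dotProduct_sub,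
    dotProduct_comm y x]
  ring

lemma integrable_dotp_sq_mul_dotp_sq_gaussHalf {d : ℕ} (x y : Fin d → ℝ) :
    Integrable (fun a => dotp x a ^ 2 * dotp y a ^ 2) (gaussHalf d) := by
  refine ((integrable_dotp_pow_gaussHalf x 4).add (integrable_dotp_pow_gaussHalf y 4)).mono'
    (((measurable_dotp x).pow_const 2).mul ((measurable_dotp y).pow_const 2)).aestronglyMeasurable
    (ae_of_all _ fun a => ?_)
  rw [Real.norm_eq_abs, abs_of_nonneg (by positivity), Pi.add_apply]
  nlinarith [sq_nonneg (dotp x a ^ 2 - dotp y a ^ 2), sq_nonneg (dotp x a * dotp y a)]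

theorem opu_kernel_deg_two_general (d : ℕ) (x y : Fin d → ℝ) :
    ∫ p : (Fin d → ℝ) × (Fin d → ℝ),
        ((dotp x p.1) ^ 2 + (dotp x p.2) ^ 2) * ((dotp y p.1) ^ 2 + (dotp y p.2) ^ 2)
        ∂((gaussHalf d).prod (gaussHalf d))
      = (∑ i, x i ^ 2) * (∑ i, y i ^ 2) + (dotp x y) ^ 2 := by
  rw [integral_prod_self_add_mul_add (integrable_dotp_pow_gaussHalf x 2)
    (integrable_dotp_pow_gaussHalf y 2) (integrable_dotp_sq_mul_dotp_sq_gaussHalf x y),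
    integral_dotp_sq_mul_dotp_sq_gaussHalf, integral_dotp_sq_gaussHalf, integral_dotp_sq_gaussHalf]
  simp only [dotp, ← sq]
  ring

/-- For `a, b` independent with i.i.d. `N(0,1/2)` entries,
`E[(⟨x,a⟩² + ⟨x,b⟩²)(⟨y,a⟩² + ⟨y,b⟩²)] = ‖x‖²‖y‖² + ⟨x,y⟩²`. -/
theorem opu_kernel_deg_two (d : ℕ) (hd : 1 ≤ d) (x y : Fin d → ℝ) :
    ∫ p : (Fin d → ℝ) × (Fin d → ℝ),
        ((dotp x p.1) ^ 2 + (dotp x p.2) ^ 2) * ((dotp y p.1) ^ 2 + (dotp y p.2) ^ 2)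
        ∂((gaussHalf d).prod (gaussHalf d))
      = (∑ i, x i ^ 2) * (∑ i, y i ^ 2) + (dotp x y) ^ 2 :=
  opu_kernel_deg_two_general d x y
end

section
/- Let s ≥ 0 be a natural number, let c, t ∈ ℝ be arbitrary, and let a₁, a₂, b₁, b₂ be i.i.d. real Gaussian N(0, 1/2) random variables. Then E[ (a₁² + b₁²)^s ( (a₁ c + a₂ t)² + (b₁ c + b₂ t)² )^s ] = ∑_{i=0}^{s} (binom(s,i))² (s+i)! (s−i)! c^{2i} t^{2(s−i)}. (Equivalently: for u₁, u₂ i.i.d. standard complex Gaussians, E[|u₁|^{2s} |u₁ c + u₂ t|^{2s}] equals this sum.) -/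
/-!
Write `u = a₁ + b₁ i` and `v = a₂ + b₂ i`. The integrand is `|P(u, v)|²` for
`P = u^s (c u + t v)^s = ∑ⱼ C(s,j) cʲ t^(s-j) u^(s+j) v^(s-j)`. For independent standard complex
Gaussians the monomials `u^a v^b` are orthogonal with `E |u^a v^b|² = a! b!`: the mixed moments
`E[u^m ū^n]`, `m ≠ n`, vanish because the density `π⁻¹ exp (-|u|²)` is invariant under
`u ↦ e^{iθ} u`, and `E |u|^(2m) = m!` is a Gamma integral. Expanding `E |P|²` then leaves only the
diagonal terms `C(s,j)² c^(2j) t^(2(s-j)) (s+j)! (s-j)!`.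
-/

open MeasureTheory ProbabilityTheory Real
open scoped ComplexConjugate ENNReal

noncomputable def stdComplexGaussian : Measure ℂ :=
  ((gaussianReal 0 (1/2)).prod (gaussianReal 0 (1/2))).map Complex.equivRealProdCLM.symm

instance : IsGaussian stdComplexGaussian := by
  unfold stdComplexGaussian
  infer_instance

section Moments

variable {E : Type*} [NormedAddCommGroup E] [NormedSpace ℝ E]

lemma integral_stdComplexGaussian (f : ℂ → E) :
    ∫ z, f z ∂stdComplexGaussian = ∫ z, (π⁻¹ * rexp (-‖z‖ ^ 2)) • f z := by
  have hdensity (x y : ℝ) : gaussianPDFReal 0 (1/2) x * gaussianPDFReal 0 (1/2) y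
      = π⁻¹ * rexp (-(x ^ 2 + y ^ 2)) := by
    simp only [gaussianPDFReal, sub_zero, NNReal.coe_div, NNReal.coe_one, NNReal.coe_ofNat]
    rw [mul_mul_mul_comm, ← Real.exp_add]
    field_simp
    rw [Real.sq_sqrt pi_pos.le, neg_add]
  have hpdf : Measurable (gaussianPDF 0 (1/2)) := measurable_gaussianPDF 0 (1/2)
  have he : MeasurableEmbedding (Complex.equivRealProdCLM.symm : ℝ × ℝ → ℂ) :=
    Complex.equivRealProdCLM.symm.toHomeomorph.measurableEmbedding
  rw [stdComplexGaussian, he.integral_map, gaussianReal_of_var_ne_zero _ (by norm_num),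
    prod_withDensity hpdf hpdf, ← Measure.volume_eq_prod,
    integral_withDensity_eq_integral_toReal_smul (by fun_prop)
      (ae_of_all _ fun _ => ENNReal.mul_lt_top (by simp [gaussianPDF]) (by simp [gaussianPDF])),
    ← Complex.volume_preserving_equiv_real_prod.symm.integral_comp
      Complex.measurableEquivRealProd.symm.measurableEmbedding]
  refine integral_congr_ae (ae_of_all _ fun p => ?_)
  simp only [gaussianPDF, ENNReal.toReal_mul, ENNReal.toReal_ofReal (gaussianPDFReal_nonneg _ _ _),
    hdensity]
  change _ = (π⁻¹ * rexp (-‖(⟨p.1, p.2⟩ : ℂ)‖ ^ 2)) • f ⟨p.1, p.2⟩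
  rw [Complex.sq_norm, Complex.normSq_mk, ← sq, ← sq]
  rfl

lemma integral_stdComplexGaussian_comp_mul (a : Circle) (f : ℂ → E) :
    ∫ z, f (a * z) ∂stdComplexGaussian = ∫ z, f z ∂stdComplexGaussian := by
  simp only [integral_stdComplexGaussian]
  simpa [Circle.norm_coe] using (rotation a).measurePreserving.integral_comp
    (rotation a).toHomeomorph.measurableEmbedding (fun z => (π⁻¹ * rexp (-‖z‖ ^ 2)) • f z)

end Moments

lemma integral_pow_mul_conj_pow_of_ne {m n : ℕ} (hmn : m ≠ n) :
    ∫ z, z ^ m * conj z ^ n ∂stdComplexGaussian = 0 := by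
  set θ : ℝ := π / ((m : ℝ) - n)
  have hphase : (Circle.exp θ : ℂ) ^ m * conj (Circle.exp θ : ℂ) ^ n = -1 := by
    have hmn' : (m : ℂ) - n ≠ 0 := sub_ne_zero.mpr (by exact_mod_cast hmn)
    rw [Circle.coe_exp, ← Complex.exp_conj, ← Complex.exp_nat_mul, ← Complex.exp_nat_mul,
      ← Complex.exp_add, ← Complex.exp_pi_mul_I]
    congr 1
    simp only [map_mul, Complex.conj_ofReal, Complex.conj_I, θ]
    push_cast
    field_simp
    ring
  have h := integral_stdComplexGaussian_comp_mul (Circle.exp θ) (fun z => z ^ m * conj z ^ n)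
  simp only [mul_pow, map_mul] at h
  simp_rw [mul_mul_mul_comm _ (_ ^ m), hphase] at h
  rw [integral_const_mul] at h
  linear_combination -h / 2

lemma integral_pow_mul_conj_pow_self (m : ℕ) :
    ∫ z, z ^ m * conj z ^ m ∂stdComplexGaussian = m.factorial := by
  have hradial := Complex.integral_rpow_mul_exp_neg_rpow (p := 2) (q := 2 * m) one_le_two
    (by linarith [m.cast_nonneg (α := ℝ)])
  rw [show (2 * m + 2 : ℝ) / 2 = m + 1 by ring, Real.Gamma_nat_eq_factorial,
    show (2 * m : ℝ) = (2 * m : ℕ) by push_cast; ring] at hradial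
  simp only [Real.rpow_natCast, Real.rpow_two] at hradial
  have hpt (z : ℂ) : (π⁻¹ * rexp (-‖z‖ ^ 2)) • ((‖z‖ ^ 2 : ℝ) : ℂ) ^ m
      = ((π⁻¹ * (‖z‖ ^ (2 * m) * rexp (-‖z‖ ^ 2)) : ℝ) : ℂ) := by
    rw [Complex.real_smul, pow_mul]
    push_cast
    ring
  simp only [← mul_pow, Complex.mul_conj, Complex.normSq_eq_norm_sq]
  rw [integral_stdComplexGaussian]
  simp only [hpt]
  rw [integral_complex_ofReal, integral_const_mul, hradial]
  field_simp
  push_cast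
  ring

lemma integral_pow_mul_conj_pow (m n : ℕ) :
    ∫ z, z ^ m * conj z ^ n ∂stdComplexGaussian = if m = n then (m.factorial : ℂ) else 0 := by
  split_ifs with hmn
  · subst hmn
    exact integral_pow_mul_conj_pow_self m
  · exact integral_pow_mul_conj_pow_of_ne hmn

lemma integrable_monomial_of_isGaussian {ν : Measure (ℂ × ℂ)} [IsGaussian ν] (a b c d : ℕ) :
    Integrable (fun w : ℂ × ℂ => (w.1 ^ a * conj w.1 ^ b) * (w.2 ^ c * conj w.2 ^ d)) ν := by
  refine (IsGaussian.memLp_id ν ((a + b + c + d : ℕ) : ℝ≥0∞) (by simp)).integrable_norm_pow'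
    |>.mono' (by fun_prop) (ae_of_all _ fun w => ?_)
  simp only [norm_mul, norm_pow, Complex.norm_conj, id]
  have h1 : ‖w.1‖ ≤ ‖w‖ := norm_fst_le w
  have h2 : ‖w.2‖ ≤ ‖w‖ := norm_snd_le w
  calc ‖w.1‖ ^ a * ‖w.1‖ ^ b * (‖w.2‖ ^ c * ‖w.2‖ ^ d)
      ≤ ‖w‖ ^ a * ‖w‖ ^ b * (‖w‖ ^ c * ‖w‖ ^ d) := by gcongr
    _ = ‖w‖ ^ (a + b + c + d) := by ring

lemma ofReal_normSq_sum_monomial {ι : Type*} (S : Finset ι) (α : ι → ℂ) (e : ι → ℕ × ℕ)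
    (u v : ℂ) :
    (Complex.normSq (∑ i ∈ S, α i * u ^ (e i).1 * v ^ (e i).2) : ℂ)
      = ∑ i ∈ S, ∑ k ∈ S, α i * conj (α k) *
          ((u ^ (e i).1 * conj u ^ (e k).1) * (v ^ (e i).2 * conj v ^ (e k).2)) := by
  rw [← Complex.mul_conj, map_sum, Finset.sum_mul_sum]
  refine Finset.sum_congr rfl fun i _ => Finset.sum_congr rfl fun k _ => ?_
  simp only [map_mul, map_pow]
  ring

theorem integral_normSq_sum_monomial {ι : Type*} (S : Finset ι) (α : ι → ℂ) (e : ι → ℕ × ℕ)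
    (he : Set.InjOn e S) :
    ∫ w, Complex.normSq (∑ i ∈ S, α i * w.1 ^ (e i).1 * w.2 ^ (e i).2)
        ∂stdComplexGaussian.prod stdComplexGaussian
      = ∑ i ∈ S, Complex.normSq (α i) * (e i).1.factorial * (e i).2.factorial := by
  have hmoment (i k : ι) : ∫ w, α i * conj (α k) * ((w.1 ^ (e i).1 * conj w.1 ^ (e k).1) *
      (w.2 ^ (e i).2 * conj w.2 ^ (e k).2)) ∂stdComplexGaussian.prod stdComplexGaussian
        = α i * conj (α k) * ((if (e i).1 = (e k).1 then ((e i).1.factorial : ℂ) else 0) *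
          (if (e i).2 = (e k).2 then ((e i).2.factorial : ℂ) else 0)) := by
    rw [integral_const_mul, integral_prod_mul (fun u => u ^ (e i).1 * conj u ^ (e k).1)
      (fun v => v ^ (e i).2 * conj v ^ (e k).2), integral_pow_mul_conj_pow,
      integral_pow_mul_conj_pow]
  apply Complex.ofReal_injective
  rw [← integral_complex_ofReal]
  simp_rw [ofReal_normSq_sum_monomial]
  rw [integral_finsetSum _ fun i _ => integrable_finsetSum _ fun k _ =>
    (integrable_monomial_of_isGaussian _ _ _ _).const_mul _]
  push_cast
  refine Finset.sum_congr rfl fun i hi => ?_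
  rw [integral_finsetSum _ fun k _ => (integrable_monomial_of_isGaussian _ _ _ _).const_mul _,
    Finset.sum_eq_single_of_mem i hi, hmoment, if_pos rfl, if_pos rfl, ← Complex.mul_conj]
  · ring
  · intro k hk hki
    have hne : e i ≠ e k := fun h => hki (he hk hi h.symm)
    rw [hmoment]
    split_ifs with h1 h2 <;> simp_all [Prod.ext_iff]

lemma normSq_pow_mul_normSq_add_pow (u v : ℂ) (c t : ℝ) (s : ℕ) :
    Complex.normSq u ^ s * Complex.normSq (u * c + v * t) ^ s
      = Complex.normSq (∑ j ∈ Finset.range (s + 1),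
          ((s.choose j * c ^ j * t ^ (s - j) : ℝ) : ℂ) * u ^ (s + j) * v ^ (s - j)) := by
  rw [← map_pow, ← map_pow, ← map_mul, add_pow, Finset.mul_sum]
  congr 1
  refine Finset.sum_congr rfl fun j _ => ?_
  push_cast
  ring

lemma measurePreserving_interleave {α β γ δ : Type*} [MeasurableSpace α] [MeasurableSpace β]
    [MeasurableSpace γ] [MeasurableSpace δ] (μa : Measure α) (μb : Measure β) (μc : Measure γ)
    (μd : Measure δ) [SFinite μa] [SFinite μb] [SFinite μc] [SFinite μd] :
    MeasurePreserving (fun q : α × β × γ × δ => ((q.1, q.2.2.1), (q.2.1, q.2.2.2)))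
      (μa.prod (μb.prod (μc.prod μd))) ((μa.prod μc).prod (μb.prod μd)) := by
  have h1 := (MeasurePreserving.id μa).prod
    ((measurePreserving_prodAssoc μb μc μd).symm MeasurableEquiv.prodAssoc)
  have h2 := (MeasurePreserving.id μa).prod
    ((Measure.measurePreserving_swap (μ := μb) (ν := μc)).prod (MeasurePreserving.id μd))
  have h3 := (MeasurePreserving.id μa).prod (measurePreserving_prodAssoc μc μb μd)
  have h4 := (measurePreserving_prodAssoc μa μc (μb.prod μd)).symm MeasurableEquiv.prodAssoc
  exact ((h4.comp h3).comp h2).comp h1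

lemma measurePreserving_toComplexPair :
    MeasurePreserving (fun q : ℝ × ℝ × ℝ × ℝ => ((⟨q.1, q.2.2.1⟩ : ℂ), (⟨q.2.1, q.2.2.2⟩ : ℂ)))
      ((gaussianReal 0 (1/2)).prod ((gaussianReal 0 (1/2)).prod
        ((gaussianReal 0 (1/2)).prod (gaussianReal 0 (1/2)))))
      (stdComplexGaussian.prod stdComplexGaussian) := by
  have he : MeasurePreserving Complex.equivRealProdCLM.symm
      ((gaussianReal 0 (1/2)).prod (gaussianReal 0 (1/2))) stdComplexGaussian :=
    Complex.equivRealProdCLM.symm.continuous.measurable.measurePreserving _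
  exact (he.prod he).comp (measurePreserving_interleave _ _ _ _)

/-- For `a₁, a₂, b₁, b₂` i.i.d. `N(0, 1/2)`, arbitrary reals `c, t`, and `s : ℕ`,
`E[(a₁² + b₁²)^s ((a₁ c + a₂ t)² + (b₁ c + b₂ t)²)^s]
  = ∑_{i=0}^{s} C(s,i)² (s+i)! (s−i)! c^{2i} t^{2(s−i)}`. -/
theorem opu_two_dim_moment_even_exponent (s : ℕ) (c t : ℝ) :
    ∫ q : ℝ × ℝ × ℝ × ℝ,
        (q.1 ^ 2 + q.2.2.1 ^ 2) ^ s *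
          ((q.1 * c + q.2.1 * t) ^ 2 + (q.2.2.1 * c + q.2.2.2 * t) ^ 2) ^ s
        ∂((gaussianReal 0 (1/2)).prod ((gaussianReal 0 (1/2)).prod
            ((gaussianReal 0 (1/2)).prod (gaussianReal 0 (1/2)))))
      = ∑ i ∈ Finset.range (s + 1),
          ((s.choose i : ℝ)) ^ 2 * ((s + i).factorial : ℝ) * ((s - i).factorial : ℝ) *
            c ^ (2 * i) * t ^ (2 * (s - i)) := by
  set P : ℂ × ℂ → ℝ := fun w => Complex.normSq (∑ j ∈ Finset.range (s + 1),
    ((s.choose j * c ^ j * t ^ (s - j) : ℝ) : ℂ) * w.1 ^ (s + j) * w.2 ^ (s - j)) with hP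
  have hpoint (q : ℝ × ℝ × ℝ × ℝ) : (q.1 ^ 2 + q.2.2.1 ^ 2) ^ s *
      ((q.1 * c + q.2.1 * t) ^ 2 + (q.2.2.1 * c + q.2.2.2 * t) ^ 2) ^ s
        = P (⟨q.1, q.2.2.1⟩, ⟨q.2.1, q.2.2.2⟩) := by
    rw [hP]
    dsimp only
    rw [← normSq_pow_mul_normSq_add_pow]
    simp only [Complex.normSq_apply, Complex.add_re, Complex.mul_re, Complex.ofReal_re,
      Complex.ofReal_im, mul_zero, sub_zero, Complex.add_im, Complex.mul_im, zero_add]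
    ring
  have hinj : Set.InjOn (fun j => (s + j, s - j)) (Finset.range (s + 1) : Set ℕ) :=
    fun j _ k _ h => by simpa using congrArg Prod.fst h
  have hf := measurePreserving_toComplexPair
  rw [integral_congr_ae (ae_of_all _ hpoint), ← integral_map (f := P) hf.aemeasurable
    (by fun_prop), hf.map_eq, integral_normSq_sum_monomial _ _ _ hinj]
  refine Finset.sum_congr rfl fun j _ => ?_
  rw [Complex.normSq_ofReal]
  ring
end

section
/- For all natural numbers s and a with a ≤ s, the alternating sum T_a := ∑_{i=0}^{a} (binom(s,i))² (s+i)! (s−i)! binom(s−i, a−i) (−1)^{a−i} satisfies T_a = (s!)² (binom(s,a))², where the computation is carried out in the integers. -/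
/-!
Each summand factors as `(s!)² C(s,a) · C(a,i) C(s+i,s)`, so `T_a / ((s!)² C(s,a))` is the
`a`-th forward difference of `x ↦ C(x,s)` at `x = s`. Since `Δ C(x, m+1) = C(x, m)`, that
difference is `C(s, s-a) = C(s,a)`.
-/

open Finset Nat

lemma Nat.choose_sq_mul_factorial_add_mul_factorial_sub_mul_choose {s a i : ℕ} (hi : i ≤ a)
    (ha : a ≤ s) :
    s.choose i ^ 2 * (s + i)! * (s - i)! * (s - i).choose (a - i)
      = s ! ^ 2 * s.choose a * (a.choose i * (s + i).choose s) := by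
  have h_add : (s + i).choose s * s ! * i ! = (s + i)! := by
    simpa using Nat.choose_mul_factorial_mul_factorial (Nat.le_add_right s i)
  have h_sub : s.choose i * i ! * (s - i)! = s ! :=
    Nat.choose_mul_factorial_mul_factorial (hi.trans ha)
  calc s.choose i ^ 2 * (s + i)! * (s - i)! * (s - i).choose (a - i)
      = s.choose i * (s - i).choose (a - i) * ((s + i).choose s * s ! * i !) *
          s.choose i * (s - i)! := by rw [h_add]; ring
    _ = s.choose a * a.choose i * (s + i).choose s * s ! * (s.choose i * i ! * (s - i)!) := by
          rw [← Nat.choose_mul hi]; ring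
    _ = s ! ^ 2 * s.choose a * (a.choose i * (s + i).choose s) := by rw [h_sub]; ring

lemma sum_range_neg_one_pow_mul_choose_mul_choose_add (a j x : ℕ) :
    ∑ i ∈ range (a + 1), (-1 : ℤ) ^ (a - i) * a.choose i * (x + i).choose (a + j)
      = x.choose j := by
  have h := congrFun (fwdDiff_iter_choose j a) x
  rw [fwdDiff_iter_eq_sum_shift] at h
  simpa [smul_eq_mul] using h

/-- The alternating sum
`T_a = ∑_{i=0}^{a} C(s,i)² (s+i)! (s−i)! C(s−i, a−i) (−1)^{a−i}` equals `(s!)² C(s,a)²`. -/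
theorem opu_alternating_sum (s a : ℕ) (ha : a ≤ s) :
    ∑ i ∈ Finset.range (a + 1),
        ((s.choose i : ℤ)) ^ 2 * ((s + i).factorial : ℤ) * ((s - i).factorial : ℤ) *
          ((s - i).choose (a - i) : ℤ) * (-1) ^ (a - i)
      = ((s.factorial : ℤ)) ^ 2 * ((s.choose a : ℤ)) ^ 2 := by
  calc ∑ i ∈ range (a + 1),
        ((s.choose i : ℤ)) ^ 2 * ((s + i)! : ℤ) * ((s - i)! : ℤ) *
          ((s - i).choose (a - i) : ℤ) * (-1) ^ (a - i)
      = ∑ i ∈ range (a + 1), (s ! ^ 2 * s.choose a : ℤ) *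
          ((-1) ^ (a - i) * a.choose i * (s + i).choose (a + (s - a))) := by
        refine sum_congr rfl fun i hi => ?_
        have h := Nat.choose_sq_mul_factorial_add_mul_factorial_sub_mul_choose
          (Nat.lt_succ_iff.mp (mem_range.mp hi)) ha
        rw [Nat.add_sub_cancel' ha]
        rw [← Nat.cast_inj (R := ℤ)] at h
        push_cast at h
        linear_combination (-1 : ℤ) ^ (a - i) * h
    _ = s ! ^ 2 * s.choose a * s.choose (s - a) := by
        rw [← mul_sum, sum_range_neg_one_pow_mul_choose_mul_choose_add]
    _ = s ! ^ 2 * s.choose a ^ 2 := by rw [Nat.choose_symm ha]; ring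
end

section
/- For every natural number s and every real number c, ∑_{i=0}^{s} (binom(s,i))² (s+i)! (s−i)! c^{2i} (1 − c²)^{s−i} = (s!)² ∑_{a=0}^{s} (binom(s,a))² c^{2a}. -/
/-!
With `x = c²` and `C(s,i) (s+i)! (s-i)! = (s!)² C(s+i,i)`, it suffices to show
`∑ᵢ C(s,i) C(s+i,i) xⁱ (1-x)^(s-i) = ∑ₐ C(s,a)² xᵃ`. Expand `C(s+i,i) = ∑ₐ C(s,a) C(i,a)`
(Vandermonde) and exchange the sums. For fixed `a`, `C(s,i) C(i,a) = C(s,a) C(s-a,i-a)`, so the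
binomial theorem collapses `∑ᵢ C(s,i) C(i,a) xⁱ (1-x)^(s-i)` to `C(s,a) xᵃ`.
-/

open Finset Nat

theorem Nat.sum_range_choose_mul_choose (m n : ℕ) :
    ∑ a ∈ range (m + 1), m.choose a * n.choose a = (m + n).choose n := by
  rw [← Nat.choose_symm_add, Nat.add_choose_eq, ← Nat.sum_antidiagonal_swap]
  simp only [Prod.fst_swap, Prod.snd_swap]
  rw [Nat.sum_antidiagonal_eq_sum_range_succ (fun i j => m.choose j * n.choose i)]
  refine sum_congr rfl fun a ha => ?_
  rw [Nat.choose_symm (mem_range_succ_iff.mp ha)]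

theorem Nat.choose_mul_add_factorial_mul_sub_factorial {s i : ℕ} (hi : i ≤ s) :
    s.choose i * (s + i)! * (s - i)! = s ! ^ 2 * (s + i).choose i :=
  calc s.choose i * (s + i)! * (s - i)!
      = (s + i).choose i * s ! * (s.choose i * i ! * (s - i)!) := by
        rw [← Nat.add_choose_mul_factorial_mul_factorial s i]; ring
    _ = s ! ^ 2 * (s + i).choose i := by rw [Nat.choose_mul_factorial_mul_factorial hi]; ring

theorem sum_range_choose_mul_choose_mul_pow_mul_pow {R : Type*} [CommSemiring R]
    (n a : ℕ) (x y : R) :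
    ∑ i ∈ range (n + 1), (n.choose i * i.choose a : R) * x ^ i * y ^ (n - i)
      = n.choose a * x ^ a * (x + y) ^ (n - a) := by
  rcases lt_or_ge n a with hna | han
  · rw [Nat.choose_eq_zero_of_lt hna, Nat.cast_zero, zero_mul, zero_mul]
    refine sum_eq_zero fun i hi => ?_
    simp [Nat.choose_eq_zero_of_lt ((mem_range_succ_iff.mp hi).trans_lt hna)]
  obtain ⟨m, rfl⟩ := Nat.exists_eq_add_of_le han
  have below_a : ∑ i ∈ range a, ((a + m).choose i * i.choose a : R) * x ^ i * y ^ (a + m - i)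
      = 0 :=
    sum_eq_zero fun i hi => by simp [Nat.choose_eq_zero_of_lt (mem_range.mp hi)]
  rw [add_assoc, sum_range_add, below_a, zero_add, Nat.add_sub_cancel_left, add_pow, mul_sum]
  refine sum_congr rfl fun k _ => ?_
  have hnat := Nat.choose_mul (n := a + m) (Nat.le_add_right a k)
  rw [Nat.add_sub_cancel_left, Nat.add_sub_cancel_left] at hnat
  have hcast : ((a + m).choose (a + k) * (a + k).choose a : R) = (a + m).choose a * m.choose k := by
    simpa only [Nat.cast_mul] using congrArg (Nat.cast : ℕ → R) hnat
  rw [hcast, Nat.add_sub_add_left, pow_add]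
  ring

theorem sum_range_choose_mul_add_choose_mul_pow_mul_one_sub_pow {R : Type*} [CommRing R]
    (s : ℕ) (x : R) :
    ∑ i ∈ range (s + 1), (s.choose i * (s + i).choose i : R) * x ^ i * (1 - x) ^ (s - i)
      = ∑ a ∈ range (s + 1), (s.choose a : R) ^ 2 * x ^ a := by
  simp_rw [← Nat.sum_range_choose_mul_choose s, Nat.cast_sum, Nat.cast_mul, mul_sum, sum_mul]
  rw [sum_comm]
  refine sum_congr rfl fun a _ => ?_
  have bernstein := sum_range_choose_mul_choose_mul_pow_mul_pow s a x (1 - x)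
  rw [add_sub_cancel, one_pow, mul_one] at bernstein
  rw [sq, mul_assoc, ← bernstein, mul_sum]
  exact sum_congr rfl fun i _ => by ring

/-- For every natural `s` and real `c`,
`∑_{i=0}^{s} C(s,i)² (s+i)! (s−i)! c^{2i} (1 − c²)^{s−i} = (s!)² ∑_{a=0}^{s} C(s,a)² c^{2a}`. -/
theorem opu_kernel_polynomial_identity (s : ℕ) (c : ℝ) :
    ∑ i ∈ Finset.range (s + 1),
        ((s.choose i : ℝ)) ^ 2 * ((s + i).factorial : ℝ) * ((s - i).factorial : ℝ) *
          c ^ (2 * i) * (1 - c ^ 2) ^ (s - i)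
      = ((s.factorial : ℝ)) ^ 2 *
          ∑ a ∈ Finset.range (s + 1), ((s.choose a : ℝ)) ^ 2 * c ^ (2 * a) := by
  simp_rw [pow_mul, ← sum_range_choose_mul_add_choose_mul_pow_mul_one_sub_pow, mul_sum]
  refine sum_congr rfl fun i hi => ?_
  have hfact : (s.choose i * (s + i)! * (s - i)! : ℝ) = (s ! : ℝ) ^ 2 * (s + i).choose i := by
    exact_mod_cast Nat.choose_mul_add_factorial_mul_sub_factorial (mem_range_succ_iff.mp hi)
  linear_combination (s.choose i * (c ^ 2) ^ i * (1 - c ^ 2) ^ (s - i)) * hfact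
end
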